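/- arXiv:1608.06011 — 3 statements merged into one kernel-verified Lean document; each statement's English description precedes it below -/
import Mathlib

section
/- Let n ≥ 1 and let v_0, …, v_n ∈ R^n be distinct unit vectors whose pairwise Euclidean distances are all equal (i.e., they are the vertices of a regular simplex inscribed in the unit sphere). Then for every index choice 0 ≤ j_1 < … < j_n ≤ n, one has |det(v_{j_1}, …, v_{j_n})| = sqrt((n+1)^(n-1) / n^n). -/
/-!
Unit vectors at mutual distance `d` have Gram matrix `(1 - c) I + c J` with `c = 1 - d² / 2`,
whose determinant is `(1 - c)ᵐ (1 + m c)` for `m + 1` vectors. Since `n + 1` vectors in `ℝⁿ`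
are dependent, their Gram determinant vanishes, and distinctness (`c ≠ 1`) forces `c = -1/n`.
The square of the determinant of any `n` of them is their Gram determinant, which is then
`(1 + 1/n)ⁿ⁻¹ (1 - (n - 1)/n) = (n + 1)ⁿ⁻¹ / nⁿ`.
-/

open Matrix
open scoped RealInnerProductSpace

theorem det_of_ite_one_else {ι : Type*} [Fintype ι] [DecidableEq ι] {m : ℕ}
    (hι : Fintype.card ι = m + 1) {c : ℝ} (hc : c ≠ 1) :
    (of fun i j : ι => if i = j then 1 else c).det = (1 - c) ^ m * (1 + m * c) := by
  have hc' : 1 - c ≠ 0 := sub_ne_zero.mpr hc.symm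
  have hdecomp : (of fun i j : ι => if i = j then 1 else c) = (1 - c) •
      (1 + replicateCol Unit (fun _ : ι => c / (1 - c)) *
        replicateRow Unit (fun _ : ι => (1 : ℝ))) := by
    ext i j
    rcases eq_or_ne i j with rfl | h
    · simp [mul_apply]; field_simp; ring
    · simp [h, mul_apply]; field_simp
  rw [hdecomp, det_smul, det_one_add_replicateCol_mul_replicateRow, hι]
  simp only [dotProduct, Finset.sum_const, Finset.card_univ, hι, nsmul_eq_mul]
  field_simp
  push_cast
  ring

theorem det_of_ite_one_else_neg_inv {n : ℕ} (hn : 1 ≤ n) :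
    (of fun i j : Fin n => if i = j then 1 else -1 / (n : ℝ)).det =
      ((n : ℝ) + 1) ^ (n - 1) / (n : ℝ) ^ n := by
  have hn0 : (0 : ℝ) < n := by positivity
  have hc : -1 / (n : ℝ) ≠ 1 := ((div_neg_of_neg_of_pos (by norm_num) hn0).trans one_pos).ne
  rw [det_of_ite_one_else (by simpa using (Nat.sub_add_cancel hn).symm) hc, Nat.cast_sub hn,
    show 1 - -1 / (n : ℝ) = (n + 1) / n by field_simp; ring, div_pow,
    ← pow_sub_one_mul (Nat.one_le_iff_ne_zero.mp hn)]
  field_simp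
  push_cast
  ring

theorem inner_eq_one_sub_sq_div_two {E : Type*} [SeminormedAddCommGroup E]
    [InnerProductSpace ℝ E] {x y : E} (hx : ‖x‖ = 1) (hy : ‖y‖ = 1) {d : ℝ}
    (hd : ‖x - y‖ = d) : ⟪x, y⟫ = 1 - d ^ 2 / 2 := by
  have := norm_sub_sq_real x y
  rw [hx, hy, hd] at this
  linarith

theorem gram_eq_of_norm_sub_eq {E ι : Type*} [SeminormedAddCommGroup E] [InnerProductSpace ℝ E]
    [DecidableEq ι] {v : ι → E} (hv : ∀ i, ‖v i‖ = 1) {d : ℝ}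
    (hd : ∀ i j, i ≠ j → ‖v i - v j‖ = d) :
    gram ℝ v = of fun i j => if i = j then 1 else 1 - d ^ 2 / 2 := by
  ext i j
  rw [gram_apply, of_apply]
  split_ifs with h
  · rw [h, real_inner_self_eq_norm_sq, hv, one_pow]
  · exact inner_eq_one_sub_sq_div_two (hv i) (hv j) (hd i j h)

theorem one_add_mul_eq_zero_of_not_linearIndependent {E ι : Type*} [NormedAddCommGroup E]
    [InnerProductSpace ℝ E] [Fintype ι] [DecidableEq ι] {m : ℕ} (hι : Fintype.card ι = m + 1)
    {v : ι → E} {c : ℝ} (hc : c ≠ 1) (hgram : gram ℝ v = of fun i j => if i = j then 1 else c)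
    (hv : ¬ LinearIndependent ℝ v) : 1 + m * c = 0 := by
  rw [← det_gram_ne_zero_iff_linearIndependent, not_not, hgram, det_of_ite_one_else hι hc] at hv
  exact (mul_eq_zero.mp hv).resolve_left (pow_ne_zero _ (sub_ne_zero.mpr hc.symm))

theorem sq_det_eq_det_gram {ι : Type*} [Fintype ι] [DecidableEq ι]
    (w : ι → EuclideanSpace ℝ ι) : (of fun i a => w a i).det ^ 2 = (gram ℝ w).det := by
  rw [gram_eq_conjTranspose_mul (EuclideanSpace.basisFun ι ℝ), det_mul,
    conjTranspose_eq_transpose_of_trivial, det_transpose, sq]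
  rfl

/-- If `v₀, …, vₙ` are distinct unit vectors in `ℝⁿ` with all pairwise distances equal
(the vertices of a regular simplex inscribed in the unit sphere), then every `n × n`
determinant of `n` of the vectors has absolute value `√((n+1)^(n-1) / nⁿ)`. -/
theorem stmt3 (n : ℕ) (hn : 1 ≤ n) (v : Fin (n + 1) → EuclideanSpace ℝ (Fin n))
    (hv : ∀ j, ‖v j‖ = 1)
    (hinj : Function.Injective v)
    (d : ℝ) (hd : ∀ j k, j ≠ k → ‖v j - v k‖ = d) :
    ∀ s : Fin n → Fin (n + 1), StrictMono s →
      |Matrix.det (Matrix.of fun i a => v (s a) i)| =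
        Real.sqrt (((n : ℝ) + 1) ^ (n - 1) / (n : ℝ) ^ n) := by
  intro s hs
  set c := 1 - d ^ 2 / 2 with hc_def
  have hgram : gram ℝ v = of fun i j => if i = j then 1 else c := gram_eq_of_norm_sub_eq hv hd
  have hc : c ≠ 1 := by
    have h0 : (0 : Fin (n + 1)) ≠ Fin.last n := by simp [Fin.ext_iff]; omega
    rw [hc_def, ← inner_eq_one_sub_sq_div_two (hv 0) (hv _) (hd _ _ h0)]
    exact (inner_eq_one_iff_of_norm_eq_one (𝕜 := ℝ) (hv 0) (hv _)).not.mpr (hinj.ne h0)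
  have hdep : ¬ LinearIndependent ℝ v := fun h => by
    simpa using h.fintype_card_le_finrank
  have hc_eq : c = -1 / n := by
    have := one_add_mul_eq_zero_of_not_linearIndependent (Fintype.card_fin _) hc hgram hdep
    field_simp
    linarith
  have hgram_s : gram ℝ (v ∘ s) = of fun a b => if a = b then 1 else -1 / (n : ℝ) := by
    rw [show gram ℝ (v ∘ s) = (gram ℝ v).submatrix s s from rfl, hgram, ← hc_eq]
    ext a b
    simp [hs.injective.eq_iff]
  have hdet : (of fun i a => v (s a) i).det ^ 2 = (gram ℝ (v ∘ s)).det := sq_det_eq_det_gram _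
  rw [← Real.sqrt_sq_eq_abs, hdet, hgram_s, det_of_ite_one_else_neg_inv hn]
end

section
/- Let w_0, …, w_n be unit vectors in C^n forming the vertex set of a real regular simplex. Write w_j = x_j + i y_j and let u_j = (x_j, y_j), v_j = (−y_j, x_j) ∈ R^{2n} be the associated real vectors. Then for any two index choices 0 ≤ j_1 < … < j_n ≤ n and 0 ≤ k_1 < … < k_n ≤ n, one has |det(u_{j_1}, …, u_{j_n}, v_{k_1}, …, v_{k_n})| = (n+1)^(n-1) / n^n. -/
/-- The first associated real vector `u = (x₁, …, xₙ, y₁, …, yₙ) ∈ ℝ²ⁿ`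
of `w = x + iy ∈ ℂⁿ`. -/
def assocU {n : ℕ} (w : Fin n → ℂ) : Fin n ⊕ Fin n → ℝ :=
  Sum.elim (fun i => (w i).re) (fun i => (w i).im)

/-- The second associated real vector `v = (-y₁, …, -yₙ, x₁, …, xₙ) ∈ ℝ²ⁿ`
of `w = x + iy ∈ ℂⁿ`. -/
def assocV {n : ℕ} (w : Fin n → ℂ) : Fin n ⊕ Fin n → ℝ :=
  Sum.elim (fun i => -(w i).im) (fun i => (w i).re)

/-!
The real parts `xⱼ = Re wⱼ` are `n + 1` unit vectors in `ℝⁿ` with constant pairwise inner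
product `c = 1 - d² / 2`. Their Gram matrix `(1 - c) I + c J` has determinant
`(1 - c)ⁿ (1 + n c)`; it vanishes because `n + 1` vectors in `ℝⁿ` are dependent, and `c ≠ 1`
because the vectors are distinct, so `c = -1/n`. As the imaginary parts vanish, the `2n × 2n`
matrix is block diagonal with blocks `A_s = (x_{s₁} ⋯ x_{sₙ})` and `A_t`, and
`(det A_s)² = det (A_sᵀ A_s)` is the `n × n` Gram determinant `(1 - c)ⁿ⁻¹ (1 + (n - 1) c)`,
which equals `(n + 1)ⁿ⁻¹ / nⁿ`.
-/

open Matrix Module Function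

theorem det_of_ite_one_const {K ι : Type*} [Field K] [Fintype ι] [DecidableEq ι]
    {c : K} (hc : c ≠ 1) :
    (of fun i j : ι => if i = j then 1 else c).det =
      (1 - c) ^ Fintype.card ι * (1 + Fintype.card ι * c / (1 - c)) := by
  have h1c : (1 : K) - c ≠ 0 := sub_ne_zero.mpr hc.symm
  have hsplit : (of fun i j : ι => if i = j then 1 else c) = (1 - c) •
      (1 + replicateCol Unit (fun _ : ι => c / (1 - c)) *
        replicateRow Unit (fun _ : ι => (1 : K))) := by
    ext i j
    by_cases h : i = j
    · simp [h, mul_apply, mul_add, mul_div_cancel₀ _ h1c]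
    · simp [h, mul_apply, mul_div_cancel₀ _ h1c]
  rw [hsplit, det_smul, det_one_add_replicateCol_mul_replicateRow]
  simp [dotProduct, mul_div_assoc]

theorem det_of_ite_one_neg_inv (n : ℕ) :
    (of fun i j : Fin n => if i = j then 1 else -1 / (n : ℝ)).det =
      ((n : ℝ) + 1) ^ (n - 1) / (n : ℝ) ^ n := by
  have hc : -1 / (n : ℝ) ≠ 1 := by
    have : -1 / (n : ℝ) ≤ 0 := div_nonpos_of_nonpos_of_nonneg (by norm_num) n.cast_nonneg
    linarith
  rw [det_of_ite_one_const hc, Fintype.card_fin]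
  rcases n with _ | n
  · simp
  · have h1c : 1 - -1 / ((n + 1 : ℕ) : ℝ) = (n + 2) / (n + 1) := by
      push_cast
      field_simp
      ring
    rw [h1c, div_pow, Nat.add_sub_cancel]
    push_cast
    field_simp
    ring

section InnerProductSpace

variable {E ι : Type*} [NormedAddCommGroup E] [InnerProductSpace ℝ E]

theorem inner_eq_of_norm_sub_eq {x y : E} {d : ℝ} (hx : ‖x‖ = 1) (hy : ‖y‖ = 1)
    (hd : ‖x - y‖ = d) : inner ℝ x y = 1 - d ^ 2 / 2 := by
  have := norm_sub_sq_real x y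
  rw [hd, hx, hy] at this
  linarith

theorem gram_eq_of_inner_eq [DecidableEq ι] {v : ι → E} {c : ℝ} (hv : ∀ i, ‖v i‖ = 1)
    (hc : ∀ i j, i ≠ j → inner ℝ (v i) (v j) = c) :
    gram ℝ v = of fun i j => if i = j then 1 else c := by
  ext i j
  rw [gram_apply, of_apply]
  split_ifs with h
  · rw [h, real_inner_self_eq_norm_sq, hv, one_pow]
  · exact hc i j h

theorem inner_eq_neg_inv_of_finrank_le [FiniteDimensional ℝ E] {n : ℕ}
    (hE : finrank ℝ E ≤ n) {v : Fin (n + 1) → E} {c : ℝ} (hv : ∀ i, ‖v i‖ = 1)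
    (hinj : Injective v) (hc : ∀ i j, i ≠ j → inner ℝ (v i) (v j) = c) :
    c = -1 / n := by
  have hn : n ≠ 0 := by
    rintro rfl
    have : Subsingleton E := finrank_zero_iff.mp (Nat.le_zero.mp hE)
    simpa [Subsingleton.elim (v 0) 0] using hv 0
  have h01 : (0 : Fin (n + 1)) ≠ 1 := by simp [Fin.ext_iff, hn]
  have hc1 : c ≠ 1 := fun h =>
    h01 (hinj ((inner_eq_one_iff_of_norm_eq_one (hv 0) (hv 1)).mp (h ▸ hc 0 1 h01)))
  have hdep : ¬ LinearIndependent ℝ v := fun h => by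
    have := h.fintype_card_le_finrank
    simp only [Fintype.card_fin] at this
    omega
  rw [← det_gram_ne_zero_iff_linearIndependent, not_not, gram_eq_of_inner_eq hv hc,
    det_of_ite_one_const hc1, Fintype.card_fin] at hdep
  have h1c : (1 : ℝ) - c ≠ 0 := sub_ne_zero.mpr hc1.symm
  have hn' : (n : ℝ) ≠ 0 := Nat.cast_ne_zero.mpr hn
  rcases mul_eq_zero.mp hdep with h | h
  · exact absurd (pow_eq_zero_iff (Nat.succ_ne_zero n) |>.mp h) h1c
  · field_simp at h ⊢
    push_cast at h
    linarith

end InnerProductSpace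

theorem det_sq_eq_det_gram {ι : Type*} [Fintype ι] [DecidableEq ι]
    (v : ι → EuclideanSpace ℝ ι) : (of fun i a => v a i).det ^ 2 = (gram ℝ v).det := by
  rw [gram_eq_conjTranspose_mul (EuclideanSpace.basisFun ι ℝ),
    conjTranspose_eq_transpose_of_trivial, det_mul, det_transpose, sq]
  rfl

theorem norm_toLp_re_eq_norm {ι : Type*} [Fintype ι] {z : EuclideanSpace ℂ ι}
    (hz : ∀ i, (z i).im = 0) :
    ‖(WithLp.toLp 2 fun i => (z i).re : EuclideanSpace ℝ ι)‖ = ‖z‖ := by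
  simp only [EuclideanSpace.norm_eq]
  congr 1
  refine Finset.sum_congr rfl fun i _ => ?_
  rw [← Complex.re_add_im (z i), hz i]
  simp

theorem det_assocU_assocV_of_im_eq_zero {n : ℕ} {p q : Fin n → Fin n → ℂ}
    (hp : ∀ a i, (p a i).im = 0) (hq : ∀ b i, (q b i).im = 0) :
    (of fun i c : Fin n ⊕ Fin n =>
        Sum.elim (fun a => assocU (p a) i) (fun b => assocV (q b) i) c).det =
      (of fun i a => (p a i).re).det * (of fun i b => (q b i).re).det := by
  have hblock : (of fun i c : Fin n ⊕ Fin n =>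
        Sum.elim (fun a => assocU (p a) i) (fun b => assocV (q b) i) c) =
      fromBlocks (of fun i a => (p a i).re) 0 0 (of fun i b => (q b i).re) := by
    ext (i | i) (a | b) <;> simp [assocU, assocV, hp, hq]
  rw [hblock, det_fromBlocks_zero₂₁]

/-- If `w₀, …, wₙ` are unit vectors in `ℂⁿ` forming the vertex set of a real regular
simplex, then for any two strictly increasing index choices the `2n × 2n` real
determinant with columns `u_{j₁}, …, u_{jₙ}, v_{k₁}, …, v_{kₙ}` has absolute value
`(n+1)^(n-1) / nⁿ`. -/
theorem stmt11 (n : ℕ) (w : Fin (n + 1) → EuclideanSpace ℂ (Fin n))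
    (hw : ∀ j, ‖w j‖ = 1)
    (hreal : ∀ j i, (w j i).im = 0)
    (hinj : Function.Injective w)
    (d : ℝ) (hd : ∀ j k, j ≠ k → ‖w j - w k‖ = d)
    (s t : Fin n → Fin (n + 1)) (hs : StrictMono s) (ht : StrictMono t) :
    |Matrix.det (Matrix.of fun (i c : Fin n ⊕ Fin n) =>
        Sum.elim (fun a => assocU (fun i' => w (s a) i') i)
          (fun b => assocV (fun i' => w (t b) i') i) c)| =
      ((n : ℝ) + 1) ^ (n - 1) / (n : ℝ) ^ n := by
  set x : Fin (n + 1) → EuclideanSpace ℝ (Fin n) :=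
    fun j => WithLp.toLp 2 fun i => (w j i).re
  have hx : ∀ j, ‖x j‖ = 1 := fun j => (norm_toLp_re_eq_norm (hreal j)).trans (hw j)
  have hxinj : Injective x := fun j k h => hinj <| by
    ext i
    apply Complex.ext
    · exact congrFun (congrArg WithLp.ofLp h) i
    · rw [hreal, hreal]
  have hinner : ∀ j k, j ≠ k → inner ℝ (x j) (x k) = 1 - d ^ 2 / 2 := fun j k hjk =>
    inner_eq_of_norm_sub_eq (hx j) (hx k) <| by
      rw [← hd j k hjk, ← norm_toLp_re_eq_norm (by simp [hreal])]
      rfl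
  have hc := inner_eq_neg_inv_of_finrank_le finrank_euclideanSpace_fin.le hx hxinj hinner
  have hdet : ∀ r : Fin n → Fin (n + 1), Injective r →
      (of fun i a => (w (r a) i).re).det ^ 2 = ((n : ℝ) + 1) ^ (n - 1) / (n : ℝ) ^ n := by
    intro r hr
    rw [← det_of_ite_one_neg_inv, ← hc, ← gram_eq_of_inner_eq (v := x ∘ r) (fun a => hx (r a))
      (fun a b hab => hinner _ _ (hr.ne hab))]
    exact det_sq_eq_det_gram (x ∘ r)
  rw [det_assocU_assocV_of_im_eq_zero (fun a => hreal (s a)) (fun b => hreal (t b))]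
  have hK : 0 ≤ ((n : ℝ) + 1) ^ (n - 1) / (n : ℝ) ^ n := by positivity
  rw [← abs_of_nonneg hK, ← sq_eq_sq_iff_abs_eq_abs, mul_pow, hdet s hs.injective,
    hdet t ht.injective, sq]
end

section
/- Let k ≥ 2 and for j = 0, …, k let v_j = (cos(jπ/(k+1)), sin(jπ/(k+1))) ∈ R^2. Then each v_j is a unit vector and the minimum, over all pairs 0 ≤ i < j ≤ k, of |det(v_i, v_j)| equals sin(π/(k+1)). -/
/-!
The determinant of two unit vectors at angles `a` and `b` is `sin (b - a)`, so the values
`|det (vᵢ, vⱼ)|` are `sin (n π / (k + 1))` for `n = j - i ∈ [1, k]`. These angles lie in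
`[π / (k + 1), π - π / (k + 1)]`, on which `sin` is smallest at the endpoints, where it equals
`sin (π / (k + 1))`; the pair `(0, 1)` attains it.
-/

open Real

theorem Real.sin_le_sin_of_le_of_le_pi_sub {a b : ℝ} (ha : 0 ≤ a) (hab : a ≤ b)
    (hb : b ≤ π - a) : sin a ≤ sin b := by
  rcases le_total b (π / 2) with hb' | hb'
  · exact sin_le_sin_of_le_of_le_pi_div_two (by linarith [pi_pos]) hb' hab
  · rw [← sin_pi_sub b]
    exact sin_le_sin_of_le_of_le_pi_div_two (by linarith [pi_pos]) (by linarith) (by linarith)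

theorem Matrix.det_cos_sin (a b : ℝ) : !![cos a, cos b; sin a, sin b].det = sin (b - a) := by
  rw [Matrix.det_fin_two_of, sin_sub]
  ring

theorem Real.sin_pi_div_succ_le_sin_nat_mul {n k : ℕ} (hn : 1 ≤ n) (hnk : n ≤ k) :
    sin (π / (k + 1)) ≤ sin (n * π / (k + 1)) := by
  have hn' : (1 : ℝ) ≤ n := by exact_mod_cast hn
  have hnk' : (n : ℝ) ≤ k := by exact_mod_cast hnk
  apply sin_le_sin_of_le_of_le_pi_sub (by positivity)
  · gcongr
    nlinarith [pi_pos]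
  · have : π - π / (k + 1) = k * π / (k + 1) := by field_simp; ring
    rw [this]
    gcongr

/-- For `k ≥ 2` and `vⱼ = (cos (jπ/(k+1)), sin (jπ/(k+1)))`, `j = 0, …, k`: each `vⱼ`
is a unit vector, and the minimum over all pairs `i < j` of `|det(vᵢ, vⱼ)|` equals
`sin (π/(k+1))` (stated via `IsLeast`). -/
theorem stmt17 (k : ℕ) (hk : 2 ≤ k) (v : Fin (k + 1) → EuclideanSpace ℝ (Fin 2))
    (hv : ∀ j : Fin (k + 1), v j =
      ![Real.cos (j * Real.pi / (k + 1)), Real.sin (j * Real.pi / (k + 1))]) :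
    (∀ j, ‖v j‖ = 1) ∧
      IsLeast {x : ℝ | ∃ i j : Fin (k + 1), i < j ∧
          x = |Matrix.det !![v i 0, v j 0; v i 1, v j 1]|}
        (Real.sin (Real.pi / (k + 1))) := by
  have hdet (i j : Fin (k + 1)) (hij : i < j) :
      Matrix.det !![v i 0, v j 0; v i 1, v j 1] = sin ((j - i : ℕ) * π / (k + 1)) := by
    rw [hv i, hv j]
    simp only [Matrix.cons_val_zero, Matrix.cons_val_one, Matrix.det_cos_sin,
      Nat.cast_sub (Fin.le_iff_val_le_val.mp hij.le)]
    ring_nf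
  refine ⟨fun j => ?_, ⟨⟨0, by omega⟩, ⟨1, by omega⟩, Fin.mk_lt_mk.mpr one_pos, ?_⟩, ?_⟩
  · simp [EuclideanSpace.norm_eq, hv j, Fin.sum_univ_two]
  · rw [hdet _ _ (Fin.mk_lt_mk.mpr one_pos), Nat.sub_zero, Nat.cast_one, one_mul, abs_of_nonneg]
    exact sin_nonneg_of_nonneg_of_le_pi (by positivity)
      (div_le_self pi_pos.le (by linarith [(k.cast_nonneg : (0 : ℝ) ≤ k)]))
  · rintro x ⟨i, j, hij, rfl⟩
    rw [hdet i j hij]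
    exact (sin_pi_div_succ_le_sin_nat_mul (by omega) (by omega)).trans (le_abs_self _)
end
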